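/- (Sandwich convergence for general parameters.) Under the two-sided bounds on c_i, σ_i^2, h_i and with α_i = sign(c_i)/√M, the multi-access steady state error covariance satisfies M·(P∞(M) − σ_w^2) bounded: its limsup is at most a^2(h_max^2 σ_max^2 + σ_n^2)/(h_min^2 c_min^2) and liminf at least a^2(h_min^2 σ_min^2 + σ_n^2)/(h_max^2 c_max^2); in particular P∞(M) → σ_w^2 at rate O(1/M). -/

import Mathlib

/-!
Rationalizing the fixed point gives `S (P(S) - σw²) = (√(Y² + 4a²σw²S) - Y) / 2` with
`Y = σw²S - (a² - 1)`; this is nonnegative and tends to `a²` as `S → ∞`. Averaging the bounds on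
`h_i |c_i|` and `h_i² σ_i²` traps `S_M / M` between `L = (h_min c_min)² / (h_max² σ_max² + σn²)`
and `U = (h_max c_max)² / (h_min² σ_min² + σn²)`, so
`M (P(S_M) - σw²) = S_M (P(S_M) - σw²) / (S_M / M)` is squeezed between sequences tending to
`a² / U` and `a² / L`, while `P(S_M) → σw²` because `S_M ≥ L M → ∞`.
-/

noncomputable def Pinf (a σw S : ℝ) : ℝ :=
  ((a^2 - 1) + σw^2 * S + Real.sqrt (((a^2 - 1) + σw^2 * S)^2 + 4 * σw^2 * S)) / (2 * S)

open Filter Topology Finset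

lemma limsup_le_and_le_liminf_of_sandwich {α : Type*} {l : Filter α} [l.NeBot]
    {f lo up : α → ℝ} {b B : ℝ} (hlo : Tendsto lo l (𝓝 b)) (hup : Tendsto up l (𝓝 B))
    (hlo_le : ∀ᶠ x in l, lo x ≤ f x) (hle_up : ∀ᶠ x in l, f x ≤ up x) :
    limsup f l ≤ B ∧ b ≤ liminf f l := by
  constructor
  · rw [← hup.limsup_eq]
    exact limsup_le_limsup hle_up (hlo.isBoundedUnder_ge.mono_ge hlo_le).isCoboundedUnder_le
      hup.isBoundedUnder_le
  · rw [← hlo.liminf_eq]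
    exact liminf_le_liminf hlo_le hlo.isBoundedUnder_ge
      (hup.isBoundedUnder_le.mono_le hle_up).isCoboundedUnder_ge

section Riccati

variable (a σw : ℝ)

lemma mul_Pinf_sub_sq {S : ℝ} (hS : S ≠ 0) :
    S * (Pinf a σw S - σw^2) =
      (√((σw^2 * S - (a^2 - 1))^2 + 4 * a^2 * σw^2 * S) - (σw^2 * S - (a^2 - 1))) / 2 := by
  have hdisc : ((a^2 - 1) + σw^2 * S)^2 + 4 * σw^2 * S
      = (σw^2 * S - (a^2 - 1))^2 + 4 * a^2 * σw^2 * S := by ring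
  rw [Pinf, hdisc]
  field_simp
  ring

lemma mul_Pinf_sub_sq_nonneg {S : ℝ} (hS : 0 ≤ S) : 0 ≤ S * (Pinf a σw S - σw^2) := by
  rcases hS.eq_or_lt with rfl | hS
  · simp
  rw [mul_Pinf_sub_sq a σw hS.ne']
  have : σw^2 * S - (a^2 - 1) ≤ √((σw^2 * S - (a^2 - 1))^2 + 4 * a^2 * σw^2 * S) :=
    (le_abs_self _).trans (Real.abs_le_sqrt (le_add_of_nonneg_right (by positivity)))
  linarith

lemma tendsto_sqrt_disc_add_div_atTop :
    Tendsto (fun S => (√((σw^2 * S - (a^2 - 1))^2 + 4 * a^2 * σw^2 * S)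
      + (σw^2 * S - (a^2 - 1))) / S) atTop (𝓝 (2 * σw^2)) := by
  have hY : Tendsto (fun S : ℝ => σw^2 - (a^2 - 1) * S⁻¹) atTop (𝓝 (σw^2)) := by
    simpa using (tendsto_inv_atTop_zero.const_mul (a^2 - 1)).const_sub (σw^2)
  have hX : Tendsto (fun S : ℝ => (σw^2 - (a^2 - 1) * S⁻¹)^2 + 4 * a^2 * σw^2 * S⁻¹) atTop
      (𝓝 ((σw^2)^2)) := by
    simpa using (hY.pow 2).add (tendsto_inv_atTop_zero.const_mul (4 * a^2 * σw^2))
  have hlim := hX.sqrt.add hY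
  rw [Real.sqrt_sq (by positivity), ← two_mul] at hlim
  refine hlim.congr' ?_
  filter_upwards [eventually_gt_atTop 0] with S hS
  have hscale : (σw^2 * S - (a^2 - 1))^2 + 4 * a^2 * σw^2 * S
      = S^2 * ((σw^2 - (a^2 - 1) * S⁻¹)^2 + 4 * a^2 * σw^2 * S⁻¹) := by
    field_simp
  rw [hscale, Real.sqrt_mul (by positivity), Real.sqrt_sq hS.le]
  field_simp

lemma tendsto_mul_Pinf_sub_sq_atTop (hσw : σw ≠ 0) :
    Tendsto (fun S => S * (Pinf a σw S - σw^2)) atTop (𝓝 (a^2)) := by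
  have hσw2 : 2 * σw^2 ≠ 0 := by positivity
  have hlim := tendsto_const_nhds (x := 2 * a^2 * σw^2) |>.div
    (tendsto_sqrt_disc_add_div_atTop a σw) hσw2
  rw [show 2 * a^2 * σw^2 / (2 * σw^2) = a^2 by field_simp] at hlim
  refine hlim.congr' ?_
  filter_upwards [eventually_gt_atTop 0, (tendsto_sqrt_disc_add_div_atTop a σw).eventually
    (eventually_gt_nhds (by positivity : (0:ℝ) < 2 * σw^2))] with S hS hpos
  rw [Pi.div_apply]
  set X := (σw^2 * S - (a^2 - 1))^2 + 4 * a^2 * σw^2 * S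
  set Y := σw^2 * S - (a^2 - 1)
  have hsum : 0 < √X + Y := by simpa [hS] using hpos
  -- (√X - Y)(√X + Y) = X - Y² = 4 a² σw² S
  have hXnn : 0 ≤ X := by positivity
  rw [mul_Pinf_sub_sq a σw hS.ne', div_div_eq_mul_div, div_eq_div_iff hsum.ne' two_ne_zero]
  nlinarith [Real.sq_sqrt hXnn]

lemma tendsto_Pinf_atTop (hσw : σw ≠ 0) : Tendsto (Pinf a σw) atTop (𝓝 (σw^2)) := by
  have hlim := ((tendsto_mul_Pinf_sub_sq_atTop a σw hσw).mul tendsto_inv_atTop_zero).const_add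
    (σw^2)
  rw [mul_zero, add_zero] at hlim
  refine hlim.congr' ?_
  filter_upwards [eventually_ne_atTop 0] with S hS
  field_simp
  ring

end Riccati

/-- The `S_M` of the multi-access scheme with `α_i = sign(c_i)/√M`, written with
`x i = h_i |c_i|` and `y i = h_i² σ_i²`. -/
noncomputable def snr (x y : ℕ → ℝ) (σn2 : ℝ) (M : ℕ) : ℝ :=
  (∑ i ∈ range M, x i / √M)^2 / (∑ i ∈ range M, y i / M + σn2)

lemma sum_range_div_mem_Icc {x : ℕ → ℝ} {lo hi : ℝ} {M : ℕ} (hM : M ≠ 0)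
    (hx : ∀ i, x i ∈ Set.Icc lo hi) : ∑ i ∈ range M, x i / M ∈ Set.Icc lo hi := by
  have hM' : (0:ℝ) < M := by positivity
  rw [← sum_div, Set.mem_Icc, le_div_iff₀ hM', div_le_iff₀ hM']
  constructor
  · simpa [mul_comm] using card_nsmul_le_sum (range M) x lo fun i _ => (hx i).1
  · simpa [mul_comm] using sum_le_card_nsmul (range M) x hi fun i _ => (hx i).2

section SNR

variable {x y : ℕ → ℝ} {σn2 : ℝ} {M : ℕ}

lemma snr_div_self (hM : M ≠ 0) :
    snr x y σn2 M / M = (∑ i ∈ range M, x i / M)^2 / (∑ i ∈ range M, y i / M + σn2) := by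
  have hM' : (0:ℝ) < M := by positivity
  rw [snr, ← sum_div, ← sum_div (range M) x, div_pow, div_pow, Real.sq_sqrt hM'.le]
  field_simp

lemma snr_div_self_mem_Icc {xlo xhi ylo yhi : ℝ} (hM : M ≠ 0) (hxlo : 0 ≤ xlo)
    (hylo : 0 < ylo + σn2) (hx : ∀ i, x i ∈ Set.Icc xlo xhi) (hy : ∀ i, y i ∈ Set.Icc ylo yhi) :
    snr x y σn2 M / M ∈ Set.Icc (xlo^2 / (yhi + σn2)) (xhi^2 / (ylo + σn2)) := by
  obtain ⟨hx_lo, hx_hi⟩ := sum_range_div_mem_Icc hM hx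
  obtain ⟨hy_lo, hy_hi⟩ := sum_range_div_mem_Icc hM hy
  rw [snr_div_self hM]
  constructor
  · gcongr
    linarith
  · gcongr
    linarith

end SNR

lemma limsup_mul_Pinf_sub_le_and_le_liminf_and_tendsto (a : ℝ) {σw L U : ℝ} {S : ℕ → ℝ}
    (hσw : σw ≠ 0) (hL : 0 < L) (hS : ∀ᶠ M : ℕ in atTop, S M / M ∈ Set.Icc L U) :
    limsup (fun M : ℕ => (M : ℝ) * (Pinf a σw (S M) - σw^2)) atTop ≤ a^2 / L ∧
      a^2 / U ≤ liminf (fun M : ℕ => (M : ℝ) * (Pinf a σw (S M) - σw^2)) atTop ∧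
      Tendsto (fun M : ℕ => Pinf a σw (S M)) atTop (𝓝 (σw^2)) := by
  have hS' : ∀ᶠ M : ℕ in atTop, M ≠ 0 ∧ S M / M ∈ Set.Icc L U :=
    (eventually_ne_atTop 0).and hS
  have hS_top : Tendsto S atTop atTop := by
    refine tendsto_atTop_mono' _ ?_ (tendsto_natCast_atTop_atTop.const_mul_atTop hL)
    filter_upwards [hS'] with M hM
    obtain ⟨hM, hLM, -⟩ := hM
    exact (le_div_iff₀ (by positivity)).1 hLM
  set g := fun M => S M * (Pinf a σw (S M) - σw^2)
  have hg : Tendsto g atTop (𝓝 (a^2)) := (tendsto_mul_Pinf_sub_sq_atTop a σw hσw).comp hS_top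
  have hg_nonneg : ∀ᶠ M in atTop, 0 ≤ g M :=
    (hS_top.eventually_ge_atTop 0).mono fun M hM => mul_Pinf_sub_sq_nonneg a σw hM
  have hg_div : ∀ᶠ M : ℕ in atTop, M * (Pinf a σw (S M) - σw^2) = g M / (S M / M) := by
    filter_upwards [hS'] with M hM
    obtain ⟨hM, hLM, -⟩ := hM
    have hM' : (0:ℝ) < M := by positivity
    have : 0 < S M := (div_pos_iff_of_pos_right hM').1 (hL.trans_le hLM)
    field_simp
    exact mul_comm _ _
  have hlo : ∀ᶠ M : ℕ in atTop, g M / U ≤ M * (Pinf a σw (S M) - σw^2) := by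
    filter_upwards [hS, hg_nonneg, hg_div] with M hSM hgM hgM_div
    rw [hgM_div]
    exact div_le_div_of_nonneg_left hgM (hL.trans_le hSM.1) hSM.2
  have hup : ∀ᶠ M : ℕ in atTop, M * (Pinf a σw (S M) - σw^2) ≤ g M / L := by
    filter_upwards [hS, hg_nonneg, hg_div] with M hSM hgM hgM_div
    rw [hgM_div]
    exact div_le_div_of_nonneg_left hgM hL hSM.1
  obtain ⟨hlimsup, hliminf⟩ :=
    limsup_le_and_le_liminf_of_sandwich (hg.div_const U) (hg.div_const L) hlo hup
  exact ⟨hlimsup, hliminf, (tendsto_Pinf_atTop a σw hσw).comp hS_top⟩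

lemma snr_div_self_mem_Icc_of_bounds {c σsq h : ℕ → ℝ} {σn2 cmin cmax σmin2 σmax2 hmin hmax : ℝ}
    (hσn : 0 ≤ σn2) (hcmin : 0 < cmin) (hσmin : 0 < σmin2) (hhmin : 0 < hmin)
    (hc : ∀ i, cmin ≤ |c i| ∧ |c i| ≤ cmax) (hσ : ∀ i, σmin2 ≤ σsq i ∧ σsq i ≤ σmax2)
    (hh : ∀ i, hmin ≤ h i ∧ h i ≤ hmax) {M : ℕ} (hM : M ≠ 0) :
    snr (fun i => h i * |c i|) (fun i => h i ^ 2 * σsq i) σn2 M / M ∈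
      Set.Icc ((hmin * cmin)^2 / (hmax^2 * σmax2 + σn2))
        ((hmax * cmax)^2 / (hmin^2 * σmin2 + σn2)) := by
  refine snr_div_self_mem_Icc hM (by positivity) (by positivity) (fun i => ⟨?_, ?_⟩)
    (fun i => ⟨?_, ?_⟩)
  · exact mul_le_mul (hh i).1 (hc i).1 hcmin.le (hhmin.le.trans (hh i).1)
  · exact mul_le_mul (hh i).2 (hc i).2 (abs_nonneg _) (hhmin.le.trans ((hh i).1.trans (hh i).2))
  · exact mul_le_mul (pow_le_pow_left₀ hhmin.le (hh i).1 2) (hσ i).1 hσmin.le (by positivity)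
  · exact mul_le_mul (pow_le_pow_left₀ (hhmin.le.trans (hh i).1) (hh i).2 2) (hσ i).2
      (hσmin.le.trans (hσ i).1) (by positivity)

theorem stmt_13 (a σw σn2 : ℝ) (hσw : 0 < σw) (hσn : 0 ≤ σn2)
    (c σsq h : ℕ → ℝ)
    (cmin cmax σmin2 σmax2 hmin hmax : ℝ)
    (hcmin : 0 < cmin) (hσmin : 0 < σmin2) (hhmin : 0 < hmin)
    (hc : ∀ i, cmin ≤ |c i| ∧ |c i| ≤ cmax)
    (hσ : ∀ i, σmin2 ≤ σsq i ∧ σsq i ≤ σmax2)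
    (hh : ∀ i, hmin ≤ h i ∧ h i ≤ hmax) :
    let S : ℕ → ℝ := fun M =>
      (∑ i ∈ Finset.range M, h i * |c i| / Real.sqrt M)^2 /
        (∑ i ∈ Finset.range M, (h i)^2 * σsq i / M + σn2)
    Filter.limsup (fun M : ℕ => (M : ℝ) * (Pinf a σw (S M) - σw^2)) Filter.atTop ≤
        a^2 * (hmax^2 * σmax2 + σn2) / (hmin^2 * cmin^2) ∧
      a^2 * (hmin^2 * σmin2 + σn2) / (hmax^2 * cmax^2) ≤
        Filter.liminf (fun M : ℕ => (M : ℝ) * (Pinf a σw (S M) - σw^2)) Filter.atTop ∧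
      Filter.Tendsto (fun M : ℕ => Pinf a σw (S M)) Filter.atTop (nhds (σw^2)) := by
  intro S
  have hL : 0 < (hmin * cmin)^2 / (hmax^2 * σmax2 + σn2) := by
    have : hmin^2 * σmin2 ≤ hmax^2 * σmax2 :=
      mul_le_mul (pow_le_pow_left₀ hhmin.le ((hh 0).1.trans (hh 0).2) 2)
        ((hσ 0).1.trans (hσ 0).2) hσmin.le (by positivity)
    have : 0 < hmax^2 * σmax2 + σn2 := by linarith [mul_pos (pow_pos hhmin 2) hσmin]
    positivity
  obtain ⟨hlimsup, hliminf, hlim⟩ := limsup_mul_Pinf_sub_le_and_le_liminf_and_tendsto a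
    hσw.ne' hL ((eventually_ne_atTop 0).mono fun M hM =>
      snr_div_self_mem_Icc_of_bounds hσn hcmin hσmin hhmin hc hσ hh hM)
  refine ⟨hlimsup.trans_eq ?_, hliminf.trans_eq' ?_, hlim⟩
  · rw [div_div_eq_mul_div, mul_pow]
  · rw [div_div_eq_mul_div, mul_pow]
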